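/- arXiv:1704.01177 — 4 statements merged into one kernel-verified Lean document; each statement's English description precedes it below -/
import Mathlib

section
/- There exist real symmetric positive definite 2×2 matrices A, B, C such that det(A+B)^{1/2} + det(A+C)^{1/2} > det(A)^{1/2} + det(A+B+C)^{1/2}. (For instance A = diag(2, 1/2), B = diag(1/2, 2), C = εI for sufficiently small ε > 0.) Hence the set function s ↦ det(∑_{k∈s} M_k)^{1/d} on subsets of [n], for positive definite d×d matrices M₁,...,Mₙ, is not supermodular in general. -/
/-- There exist real symmetric positive definite 2×2 matrices `A, B, C` such that
`det(A+B)^{1/2} + det(A+C)^{1/2} > det(A)^{1/2} + det(A+B+C)^{1/2}`.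
Hence the set function `s ↦ det(∑_{k∈s} M_k)^{1/d}` is not supermodular in general. -/
theorem stmt2 :
    ∃ A B C : Matrix (Fin 2) (Fin 2) ℝ,
      A.IsSymm ∧ B.IsSymm ∧ C.IsSymm ∧
      A.PosDef ∧ B.PosDef ∧ C.PosDef ∧
      Real.sqrt A.det + Real.sqrt (A + B + C).det
        < Real.sqrt (A + B).det + Real.sqrt (A + C).det := by
  refine ⟨Matrix.diagonal ![2, 1/2], Matrix.diagonal ![1/2, 2], Matrix.diagonal ![1, 1],
    Matrix.isSymm_diagonal _, Matrix.isSymm_diagonal _, Matrix.isSymm_diagonal _,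
    Matrix.posDef_diagonal_iff.2 (by intro i; fin_cases i <;> norm_num),
    Matrix.posDef_diagonal_iff.2 (by intro i; fin_cases i <;> norm_num),
    Matrix.posDef_diagonal_iff.2 (by intro i; fin_cases i <;> norm_num), ?_⟩
  rw [Matrix.diagonal_add, Matrix.diagonal_add, Matrix.diagonal_add,
    Matrix.det_diagonal, Matrix.det_diagonal, Matrix.det_diagonal, Matrix.det_diagonal]
  simp only [Fin.prod_univ_two, Pi.add_apply, Matrix.cons_val_zero, Matrix.cons_val_one,
    Matrix.head_cons]
  have e1 : Real.sqrt ((2:ℝ) * (1/2)) = 1 := by norm_num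
  have e2 : Real.sqrt (((2:ℝ) + 1/2 + 1) * (1/2 + 2 + 1)) = 7/2 := by
    rw [show ((2:ℝ) + 1/2 + 1) * (1/2 + 2 + 1) = (7/2)^2 by norm_num,
      Real.sqrt_sq (by norm_num)]
  have e3 : Real.sqrt (((2:ℝ) + 1/2) * (1/2 + 2)) = 5/2 := by
    rw [show ((2:ℝ) + 1/2) * (1/2 + 2) = (5/2)^2 by norm_num, Real.sqrt_sq (by norm_num)]
  have e4 : (2:ℝ) < Real.sqrt ((2 + 1) * (1/2 + 1)) := by
    rw [show ((2:ℝ) + 1) * (1/2 + 1) = 9/2 by norm_num]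
    nlinarith [Real.sq_sqrt (show (0:ℝ) ≤ 9/2 by norm_num),
      Real.sqrt_nonneg (9/2 : ℝ)]
  rw [e1, e2, e3]
  linarith
end

section
/- Let v: 2^[n] → ℝ₊ be a set function. Suppose that for every positive integer r and every r-regular multihypergraph G on [n] (i.e., a finite multiset of nonempty subsets of [n] such that every index i ∈ [n] lies in exactly r members of G, counted with multiplicity), one has v([n]) ≥ (1/r) ∑_{s∈G} v(s). Then v([n]) ≥ ∑_{∅≠s⊆[n]} β_s v(s) holds for every fractional partition β on [n]. -/
/-!
Take `⌊r β_s⌋` copies of every nonempty `s`. Each `i` is then covered at most `r` times, so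
adding singletons `{i}` yields an `r`-regular multihypergraph, and since `v ≥ 0` the hypothesis
gives `r v([n]) ≥ ∑ ⌊r β_s⌋ v(s) ≥ r ∑ β_s v(s) - ∑ v(s)`. Divide by `r` and let `r → ∞`.
-/

open Finset Filter Topology

theorem Multiset.card_filter_sum_replicate {ι α : Type*} (s : Finset ι) (m : ι → ℕ)
    (a : ι → α) (p : α → Prop) [DecidablePred p] :
    ((∑ i ∈ s, replicate (m i) (a i)).filter p).card = ∑ i ∈ s with p (a i), m i := by
  rw [← countP_eq_card_filter, ← coe_countPAddMonoidHom, map_sum, sum_filter]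
  refine Finset.sum_congr rfl fun i _ => ?_
  rw [coe_countPAddMonoidHom]
  split_ifs with h
  · rw [countP_eq_card.2 fun b hb => eq_of_mem_replicate hb ▸ h, card_replicate]
  · exact countP_eq_zero.2 fun b hb => eq_of_mem_replicate hb ▸ h

theorem Multiset.sum_map_sum_replicate {ι α M : Type*} [AddCommMonoid M] (s : Finset ι)
    (m : ι → ℕ) (a : ι → α) (f : α → M) :
    ((∑ i ∈ s, replicate (m i) (a i)).map f).sum = ∑ i ∈ s, m i • f (a i) := by
  rw [← coe_mapAddMonoidHom, map_sum, ← coe_sumAddMonoidHom, map_sum]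
  simp [map_replicate]

theorem le_of_forall_le_add_div_nat {a b c : ℝ} (h : ∀ r : ℕ, 0 < r → a ≤ b + c / r) :
    a ≤ b := by
  have hlim : Tendsto (fun r : ℕ => b + c / r) atTop (𝓝 b) := by
    simpa using tendsto_const_nhds.add (tendsto_const_div_atTop_nhds_zero_nat c)
  exact ge_of_tendsto hlim (eventually_atTop.2 ⟨1, h⟩)

section Hypergraph

variable {α : Type*} [Fintype α] [DecidableEq α]

def padToRegular (k : Finset α → ℕ) (r : ℕ) : Multiset (Finset α) :=
  (∑ s with s.Nonempty, .replicate (k s) s) +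
    ∑ i, .replicate (r - ∑ s with i ∈ s, k s) {i}

theorem nonempty_of_mem_padToRegular {k : Finset α → ℕ} {r : ℕ} {s : Finset α}
    (hs : s ∈ padToRegular k r) : s.Nonempty := by
  rcases Multiset.mem_add.1 hs with hs | hs <;> obtain ⟨t, ht, hst⟩ := Multiset.mem_sum.1 hs
  · rw [Multiset.eq_of_mem_replicate hst]
    exact (mem_filter.1 ht).2
  · rw [Multiset.eq_of_mem_replicate hst]
    exact singleton_nonempty t

theorem card_filter_mem_padToRegular {k : Finset α → ℕ} {r : ℕ} {i : α}
    (hi : ∑ s with i ∈ s, k s ≤ r) : ((padToRegular k r).filter (i ∈ ·)).card = r := by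
  have hcopies : ∑ s ∈ univ.filter Finset.Nonempty with i ∈ s, k s = ∑ s with i ∈ s, k s := by
    rw [filter_filter]
    exact sum_congr (filter_congr fun s _ => ⟨fun h => h.2, fun h => ⟨⟨i, h⟩, h⟩⟩) fun _ _ => rfl
  have hpad : (univ.filter fun j => i ∈ ({j} : Finset α)) = {i} := by
    ext j
    simp [eq_comm]
  rw [padToRegular, Multiset.filter_add, Multiset.card_add,
    Multiset.card_filter_sum_replicate, Multiset.card_filter_sum_replicate, hcopies, hpad,
    sum_singleton, add_tsub_cancel_of_le hi]

theorem sum_nsmul_le_sum_map_padToRegular {M : Type*} [AddCommMonoid M] [PartialOrder M]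
    [IsOrderedAddMonoid M] {v : Finset α → M} (hv : ∀ s, 0 ≤ v s) (k : Finset α → ℕ) (r : ℕ) :
    ∑ s with s.Nonempty, k s • v s ≤ ((padToRegular k r).map v).sum := by
  rw [padToRegular, Multiset.map_add, Multiset.sum_add, Multiset.sum_map_sum_replicate,
    Multiset.sum_map_sum_replicate]
  exact le_add_of_nonneg_right (sum_nonneg fun i _ => nsmul_nonneg (hv _) _)

theorem sum_floor_mul_le {β : Finset α → ℝ} (hβ0 : ∀ s, 0 ≤ β s) {i : α}
    (hβ : ∑ s with i ∈ s, β s = 1) (r : ℕ) : ∑ s with i ∈ s, ⌊β s * r⌋₊ ≤ r := by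
  have : ∑ s with i ∈ s, (⌊β s * r⌋₊ : ℝ) ≤ r := calc
    _ ≤ ∑ s with i ∈ s, β s * r :=
        sum_le_sum fun s _ => Nat.floor_le (mul_nonneg (hβ0 s) r.cast_nonneg)
    _ = r := by rw [← sum_mul, hβ, one_mul]
  exact_mod_cast this

theorem sum_mul_le_add_div_of_regular {v : Finset α → ℝ} (hv : ∀ s, 0 ≤ v s) {r : ℕ}
    (hr : 0 < r)
    (hreg : ∀ G : Multiset (Finset α), (∀ s ∈ G, s.Nonempty) →
      (∀ i, (G.filter (fun s => i ∈ s)).card = r) → (1 / (r : ℝ)) * (G.map v).sum ≤ v univ)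
    {β : Finset α → ℝ} (hβ0 : ∀ s, 0 ≤ β s) (hβ : ∀ i, ∑ s with i ∈ s, β s = 1) :
    ∑ s with s.Nonempty, β s * v s ≤ v univ + (∑ s with s.Nonempty, v s) / r := by
  have hr' : (0 : ℝ) < r := Nat.cast_pos.2 hr
  set k : Finset α → ℕ := fun s => ⌊β s * r⌋₊
  have hG := hreg (padToRegular k r) (fun _ => nonempty_of_mem_padToRegular)
    fun i => card_filter_mem_padToRegular (sum_floor_mul_le hβ0 (hβ i) r)
  have hcopies : ∑ s with s.Nonempty, (k s : ℝ) * v s ≤ r * v univ := by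
    rw [one_div, inv_mul_le_iff₀ hr'] at hG
    simpa only [nsmul_eq_mul] using (sum_nsmul_le_sum_map_padToRegular hv k r).trans hG
  have hround : ∀ s, β s * r ≤ k s + 1 := fun s => (Nat.lt_floor_add_one _).le
  rw [← mul_le_mul_iff_of_pos_right hr', add_mul, div_mul_cancel₀ _ hr'.ne', mul_comm (v univ)]
  calc (∑ s with s.Nonempty, β s * v s) * r
      = ∑ s with s.Nonempty, β s * r * v s := by
        rw [sum_mul]
        exact sum_congr rfl fun _ _ => mul_right_comm _ _ _
    _ ≤ ∑ s with s.Nonempty, (k s + 1) * v s :=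
        sum_le_sum fun s _ => mul_le_mul_of_nonneg_right (hround s) (hv s)
    _ = ∑ s with s.Nonempty, (k s : ℝ) * v s + ∑ s with s.Nonempty, v s := by
        simp only [add_mul, one_mul, sum_add_distrib]
    _ ≤ r * v univ + ∑ s with s.Nonempty, v s := add_le_add_left hcopies _

end Hypergraph

theorem stmt3_general (n : ℕ) (v : Finset (Fin n) → ℝ) (hv0 : ∀ s, 0 ≤ v s)
    (hyp : ∀ r : ℕ, 0 < r → ∀ G : Multiset (Finset (Fin n)),
      (∀ s ∈ G, s.Nonempty) →
      (∀ i : Fin n, (G.filter (fun s => i ∈ s)).card = r) →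
      (1 / (r : ℝ)) * (G.map v).sum ≤ v Finset.univ)
    (β : Finset (Fin n) → ℝ) (hβ0 : ∀ s, 0 ≤ β s)
    (hβ : ∀ i : Fin n,
      ∑ s ∈ Finset.univ.filter (fun s : Finset (Fin n) => i ∈ s), β s = 1) :
    ∑ s ∈ Finset.univ.filter (fun s : Finset (Fin n) => s.Nonempty), β s * v s
      ≤ v Finset.univ :=
  le_of_forall_le_add_div_nat fun r hr => sum_mul_le_add_div_of_regular hv0 hr (hyp r hr) hβ0 hβ

/-- If a nonnegative set function `v : 2^[n] → ℝ₊` satisfies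
`v([n]) ≥ (1/r) ∑_{s∈G} v(s)` for every positive integer `r` and every `r`-regular
multihypergraph `G` on `[n]` (a multiset of nonempty subsets of `[n]` such that every
index lies in exactly `r` members, counted with multiplicity), then
`v([n]) ≥ ∑_{∅≠s⊆[n]} β_s v(s)` for every fractional partition `β` on `[n]`. -/
theorem stmt3 (n : ℕ) (hn : 0 < n) (v : Finset (Fin n) → ℝ) (hv0 : ∀ s, 0 ≤ v s)
    (hyp : ∀ r : ℕ, 0 < r → ∀ G : Multiset (Finset (Fin n)),
      (∀ s ∈ G, s.Nonempty) →
      (∀ i : Fin n, (G.filter (fun s => i ∈ s)).card = r) →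
      (1 / (r : ℝ)) * (G.map v).sum ≤ v Finset.univ)
    (β : Finset (Fin n) → ℝ) (hβ0 : ∀ s, 0 ≤ β s)
    (hβ : ∀ i : Fin n,
      ∑ s ∈ Finset.univ.filter (fun s : Finset (Fin n) => i ∈ s), β s = 1) :
    ∑ s ∈ Finset.univ.filter (fun s : Finset (Fin n) => s.Nonempty), β s * v s
      ≤ v Finset.univ :=
  stmt3_general n v hv0 hyp β hβ0 hβ
end

section
/- Let M₁, M₂, ..., Mₙ be d×d real symmetric positive definite matrices. Then the function v_c: ℝ₊^n → ℝ₊ defined by v_c(x) = det(∑_{i=1}^n x_i M_i) is supermodular: for any x, y ∈ ℝ₊^n, v_c(x) + v_c(y) ≤ v_c(x∨y) + v_c(x∧y). -/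
/-!
Write `x = z + p`, `y = z + q` and `x ⊔ y = z + p + q` with `z = x ⊓ y`; then it suffices that
`det (A + P) + det (A + Q) ≤ det (A + P + Q) + det A` for positive semidefinite `A`, `P`, `Q`.
The defect of this inequality is additive in `P` once the base point moves from `A` to `A + P₁`,
so writing `P` and `Q` as sums of rank-one matrices reduces it to `P = u uᵀ`, `Q = w wᵀ` with `A`
positive definite. There the matrix determinant lemma turns the defect into `det A * (a c - b²)`
with `a = uᵀA⁻¹u`, `b = uᵀA⁻¹w`, `c = wᵀA⁻¹w`, which is nonnegative by Cauchy–Schwarz for `A⁻¹`.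
Semidefinite `A` is the limit of the positive definite `A + ε • 1`.
-/

open Matrix

namespace Matrix

variable {n : Type*} [Fintype n]

theorem PosSemidef.exists_eq_transpose_mul_self {B : Matrix n n ℝ} (hB : B.PosSemidef) :
    ∃ C : Matrix n n ℝ, B = Cᵀ * C := by
  classical
  open scoped MatrixOrder in
  obtain ⟨C, hC, -, rfl⟩ := CFC.exists_sqrt_of_isSelfAdjoint_of_quasispectrumRestricts
    hB.isHermitian (QuasispectrumRestricts.nnreal_of_nonneg hB.nonneg)
  exact ⟨C, by rw [← conjTranspose_eq_transpose_of_trivial, show Cᴴ = C from hC]⟩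

theorem PosSemidef.exists_eq_sum_vecMulVec {B : Matrix n n ℝ} (hB : B.PosSemidef) :
    ∃ v : n → n → ℝ, B = ∑ j, vecMulVec (v j) (v j) := by
  obtain ⟨C, rfl⟩ := hB.exists_eq_transpose_mul_self
  exact ⟨C, by ext i k; simp [mul_apply, vecMulVec_apply, sum_apply]⟩

theorem PosSemidef.dotProduct_mulVec_sq_le {B : Matrix n n ℝ} (hB : B.PosSemidef)
    (u w : n → ℝ) : (u ⬝ᵥ B *ᵥ w) ^ 2 ≤ (u ⬝ᵥ B *ᵥ u) * (w ⬝ᵥ B *ᵥ w) := by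
  obtain ⟨C, rfl⟩ := hB.exists_eq_transpose_mul_self
  have h (p q : n → ℝ) : p ⬝ᵥ (Cᵀ * C) *ᵥ q = (C *ᵥ p) ⬝ᵥ (C *ᵥ q) := by
    rw [← mulVec_mulVec, dotProduct_mulVec, vecMul_transpose]
  rw [h, h, h]
  simpa only [dotProduct, sq] using Finset.sum_mul_sq_le_sq_mul_sq Finset.univ (C *ᵥ u) (C *ᵥ w)

theorem IsSymm.dotProduct_mulVec_comm {R : Type*} [CommSemiring R] {B : Matrix n n R}
    (hB : B.IsSymm) (u w : n → R) : u ⬝ᵥ B *ᵥ w = w ⬝ᵥ B *ᵥ u := by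
  rw [dotProduct_mulVec, dotProduct_comm, ← mulVec_transpose, hB.eq]

variable [DecidableEq n]

theorem det_add_vecMulVec_add_vecMulVec {R : Type*} [CommRing R] {A : Matrix n n R}
    (hA : IsUnit A.det) (u w : n → R) :
    (A + vecMulVec u u + vecMulVec w w).det = A.det *
      ((1 + u ⬝ᵥ A⁻¹ *ᵥ u) * (1 + w ⬝ᵥ A⁻¹ *ᵥ w) - (u ⬝ᵥ A⁻¹ *ᵥ w) * (w ⬝ᵥ A⁻¹ *ᵥ u)) := by
  set V : Matrix (Fin 2) n R := of ![u, w]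
  have hV : vecMulVec u u + vecMulVec w w = Vᵀ * V := by
    ext i k; simp [V, mul_apply, vecMulVec_apply, Fin.sum_univ_two]
  have hVV (i j : Fin 2) : (V * A⁻¹ * Vᵀ) i j = V i ⬝ᵥ A⁻¹ *ᵥ V j := by
    simp only [mul_apply, mulVec, dotProduct, transpose_apply, Finset.mul_sum, Finset.sum_mul]
    rw [Finset.sum_comm]
    simp only [mul_comm, mul_left_comm]
  rw [add_assoc, hV, det_add_mul _ _ hA, det_fin_two]
  simp only [Matrix.add_apply, hVV, one_apply_eq, one_apply_ne zero_ne_one,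
    one_apply_ne one_ne_zero, zero_add]
  rfl

def DetSupermodularAlong (P Q : Matrix n n ℝ) : Prop :=
  ∀ A : Matrix n n ℝ, A.PosDef → (A + P).det + (A + Q).det ≤ (A + P + Q).det + A.det

namespace DetSupermodularAlong

variable {P P₁ P₂ Q : Matrix n n ℝ}

theorem symm (h : DetSupermodularAlong P Q) : DetSupermodularAlong Q P := fun A hA => by
  rw [add_right_comm]
  linarith [h A hA]

theorem add_left (hP₁ : P₁.PosSemidef) (h₁ : DetSupermodularAlong P₁ Q)
    (h₂ : DetSupermodularAlong P₂ Q) : DetSupermodularAlong (P₁ + P₂) Q := fun A hA => by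
  have := h₂ (A + P₁) (hA.add_posSemidef hP₁)
  rw [← add_assoc]
  linarith [h₁ A hA]

theorem of_vecMulVec_left (h : ∀ v, DetSupermodularAlong (vecMulVec v v) Q)
    (hP : P.PosSemidef) : DetSupermodularAlong P Q := by
  obtain ⟨v, rfl⟩ := hP.exists_eq_sum_vecMulVec
  refine (Finset.sum_induction _ (fun P => P.PosSemidef ∧ DetSupermodularAlong P Q)
    (fun P₁ P₂ h₁ h₂ => ⟨h₁.1.add h₂.1, h₁.2.add_left h₁.1 h₂.2⟩)
    ⟨.zero, fun A _ => by simp [add_comm]⟩ fun j _ => ⟨?_, h (v j)⟩).2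
  simpa using posSemidef_vecMulVec_self_star (v j)

end DetSupermodularAlong

theorem detSupermodularAlong_vecMulVec (u w : n → ℝ) :
    DetSupermodularAlong (vecMulVec u u) (vecMulVec w w) := fun A hA => by
  have hdet := det_add_vecMulVec_add_vecMulVec (isUnit_iff_ne_zero.mpr hA.det_pos.ne') (R := ℝ)
  have hu := hdet u 0
  have hw := hdet 0 w
  simp only [vecMulVec_zero, add_zero, zero_dotProduct, mulVec_zero, dotProduct_zero, mul_one,
    one_mul, mul_zero, sub_zero] at hu hw
  have hinv : A⁻¹.PosDef := hA.inv
  have hcomm := (isHermitian_iff_isSymm.mp hinv.isHermitian).dotProduct_mulVec_comm w u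
  have hcs := hinv.posSemidef.dotProduct_mulVec_sq_le u w
  rw [hu, hw, hdet, hcomm]
  nlinarith [mul_nonneg hA.det_pos.le (sub_nonneg.mpr hcs)]

theorem detSupermodularAlong_of_posSemidef {P Q : Matrix n n ℝ} (hP : P.PosSemidef)
    (hQ : Q.PosSemidef) : DetSupermodularAlong P Q :=
  .of_vecMulVec_left (fun v =>
    (DetSupermodularAlong.of_vecMulVec_left (detSupermodularAlong_vecMulVec · v) hQ).symm) hP

theorem PosSemidef.det_add_add_det_le {A P Q : Matrix n n ℝ} (hA : A.PosSemidef)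
    (hP : P.PosSemidef) (hQ : Q.PosSemidef) :
    (A + P).det + (A + Q).det ≤ (A + P + Q).det + A.det := by
  set F : ℝ → ℝ := fun ε => (A + ε • 1 + P + Q).det + (A + ε • 1).det
    - (A + ε • 1 + P).det - (A + ε • 1 + Q).det
  have hF : Continuous F := by fun_prop
  have hF_nonneg : ∀ ε ∈ Set.Ioi (0 : ℝ), 0 ≤ F ε := fun ε hε => by
    have hAε : (A + ε • 1).PosDef :=
      PosDef.posSemidef_add hA (PosDef.one.smul (Set.mem_Ioi.mp hε))
    have := detSupermodularAlong_of_posSemidef hP hQ _ hAε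
    simp only [F]
    linarith
  have : 0 ≤ F 0 := ge_of_tendsto (hF.continuousWithinAt.tendsto (s := Set.Ioi 0) (x := 0))
    (eventually_nhdsWithin_of_forall hF_nonneg)
  simp only [F, zero_smul, add_zero] at this
  linarith

end Matrix

theorem stmt7_general (n d : ℕ) (M : Fin n → Matrix (Fin d) (Fin d) ℝ)
    (hM : ∀ i, (M i).PosDef)
    (x y : Fin n → ℝ) (hx : ∀ i, 0 ≤ x i) (hy : ∀ i, 0 ≤ y i) :
    (∑ i, x i • M i).det + (∑ i, y i • M i).det
      ≤ (∑ i, (x ⊔ y) i • M i).det + (∑ i, (x ⊓ y) i • M i).det := by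
  set L := Fintype.linearCombination ℝ M
  have hL (c : Fin n → ℝ) : L c = ∑ i, c i • M i := Fintype.linearCombination_apply ℝ M c
  have hL_psd (c : Fin n → ℝ) (hc : 0 ≤ c) : (L c).PosSemidef := by
    rw [hL]
    exact posSemidef_sum _ fun i _ => (hM i).posSemidef.smul (hc i)
  set z := x ⊓ y
  have hsup : z + (x - z) + (y - z) = x ⊔ y := by
    ext i
    simp only [Pi.add_apply, Pi.sub_apply, z, Pi.inf_apply, Pi.sup_apply]
    linarith [min_add_max (x i) (y i)]
  have key := (hL_psd z (le_inf hx hy)).det_add_add_det_le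
    (hL_psd (x - z) (sub_nonneg.mpr inf_le_left)) (hL_psd (y - z) (sub_nonneg.mpr inf_le_right))
  simp only [← map_add] at key
  rwa [hsup, add_sub_cancel, add_sub_cancel, hL, hL, hL, hL] at key

/-- For d×d real symmetric positive definite matrices `M₁, ..., Mₙ`, the function
`v_c(x) = det(∑ᵢ xᵢ Mᵢ)` on the nonnegative orthant is supermodular:
`v_c(x) + v_c(y) ≤ v_c(x ∨ y) + v_c(x ∧ y)` for all `x, y ∈ ℝ₊ⁿ`. -/
theorem stmt7 (n d : ℕ) (M : Fin n → Matrix (Fin d) (Fin d) ℝ)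
    (hMs : ∀ i, (M i).IsSymm) (hM : ∀ i, (M i).PosDef)
    (x y : Fin n → ℝ) (hx : ∀ i, 0 ≤ x i) (hy : ∀ i, 0 ≤ y i) :
    (∑ i, x i • M i).det + (∑ i, y i • M i).det
      ≤ (∑ i, (x ⊔ y) i • M i).det + (∑ i, (x ⊓ y) i • M i).det :=
  stmt7_general n d M hM x y hx hy
end

section
/- For every real constant C, there exists a probability density function f on ℝ with differential entropy h(f) = 0 such that if X and X' are independent random variables each with density f, then h(X+X') > C. (Such f may be taken to be the uniform density on a union of intervals ⋃_{n∈ℕ} (2^n, 2^n + a_n) with a_n ≥ 0 and ∑ a_n = 1, for a suitable choice of the a_n.) -/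
/-!
Take `f` to be the indicator of `S = ⋃_{i<N} (2^i, 2^i + 1/N)`, a set of measure one, so that
`h(f) = 0`. Since `2^i + 2^j` determines `{i, j}` and these sums are integers, a point `x` can be
written as `y + z` with `y, z ∈ S` only for `y` in at most two of the intervals. Hence the density
`1_S ⋆ 1_S` of `X + X'` is at most `2/N` everywhere, and `h(X + X') ≥ log (N/2)`, which exceeds
`C` once `N` is large.
-/

open MeasureTheory ProbabilityTheory

/-- The differential entropy `h(μ) = -∫ f log f dx = -∫ log f dμ` of a measure `μ` on `ℝ`
with density `f = dμ/dx` with respect to Lebesgue measure. -/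
noncomputable def diffEnt1 (μ : Measure ℝ) : ℝ :=
  -∫ x, Real.log ((μ.rnDeriv volume x).toReal) ∂μ

open Set Function
open scoped ENNReal Pointwise

section Entropy

variable {α : Type*} [MeasurableSpace α] {ν : Measure α} {g : α → ℝ≥0∞}

/-- `|u log u| < 1` on `(0, 1]`, and the integrand vanishes off the support of `g`. -/
lemma integrable_log_toReal_withDensity (hg : Measurable g) (hg1 : ∀ x, g x ≤ 1)
    (hsupp : ν (support g) ≠ ∞) :
    Integrable (fun x => Real.log (g x).toReal) (ν.withDensity g) := by
  rw [integrable_withDensity_iff hg (ae_of_all _ fun x => (hg1 x).trans_lt ENNReal.one_lt_top)]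
  refine Integrable.mono' ((integrable_indicator_iff (measurableSet_support hg)).2
    (integrableOn_const hsupp (C := (1 : ℝ)))) (by fun_prop) (ae_of_all _ fun x => ?_)
  by_cases hx : g x = 0
  · simp [hx]
  · rw [indicator_of_mem hx, Real.norm_eq_abs]
    exact (Real.abs_log_mul_self_lt _
      (ENNReal.toReal_pos hx (ne_top_of_le_ne_top ENNReal.one_ne_top (hg1 x)))
      (ENNReal.toReal_le_of_le_ofReal zero_le_one (by simpa using hg1 x))).le

lemma integral_log_toReal_withDensity_le [IsProbabilityMeasure (ν.withDensity g)]
    (hg : Measurable g) (hint : Integrable (fun x => Real.log (g x).toReal) (ν.withDensity g))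
    {c : ℝ} (hc : 0 < c) (hgc : ∀ x, g x ≤ ENNReal.ofReal c) :
    ∫ x, Real.log (g x).toReal ∂(ν.withDensity g) ≤ Real.log c := by
  have hpos : ∀ᵐ x ∂(ν.withDensity g), g x ≠ 0 :=
    (ae_withDensity_iff hg).2 (ae_of_all _ fun _ hx => hx)
  calc ∫ x, Real.log (g x).toReal ∂(ν.withDensity g)
      ≤ ∫ _, Real.log c ∂(ν.withDensity g) := by
        refine integral_mono_ae hint (integrable_const _) ?_
        filter_upwards [hpos] with x hx
        exact Real.log_le_log
          (ENNReal.toReal_pos hx (ne_top_of_le_ne_top ENNReal.ofReal_ne_top (hgc x)))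
          (ENNReal.toReal_le_of_le_ofReal hc.le (hgc x))
    _ = Real.log c := by simp

lemma log_rnDeriv_withDensity_ae_eq [SigmaFinite ν] (hg : Measurable g) :
    (fun x => Real.log ((ν.withDensity g).rnDeriv ν x).toReal)
      =ᵐ[ν.withDensity g] fun x => Real.log (g x).toReal :=
  ((withDensity_absolutelyContinuous _ _).ae_eq (Measure.rnDeriv_withDensity ν hg)).fun_comp
    fun y => Real.log y.toReal

end Entropy

section DiffEnt

variable {g : ℝ → ℝ≥0∞}

lemma integrable_log_rnDeriv_withDensity (hg : Measurable g) (hg1 : ∀ x, g x ≤ 1)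
    (hsupp : volume (support g) ≠ ∞) :
    Integrable (fun x => Real.log ((volume.withDensity g).rnDeriv volume x).toReal)
      (volume.withDensity g) :=
  (integrable_log_toReal_withDensity hg hg1 hsupp).congr (log_rnDeriv_withDensity_ae_eq hg).symm

lemma neg_log_le_diffEnt1_withDensity [IsProbabilityMeasure (volume.withDensity g)]
    (hg : Measurable g) {c : ℝ} (hc : 0 < c) (hc1 : c ≤ 1)
    (hgc : ∀ x, g x ≤ ENNReal.ofReal c) (hsupp : volume (support g) ≠ ∞) :
    -Real.log c ≤ diffEnt1 (volume.withDensity g) := by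
  have hg1 : ∀ x, g x ≤ 1 := fun x => (hgc x).trans (ENNReal.ofReal_le_one.2 hc1)
  rw [diffEnt1, integral_congr_ae (log_rnDeriv_withDensity_ae_eq hg), neg_le_neg_iff]
  exact integral_log_toReal_withDensity_le hg (integrable_log_toReal_withDensity hg hg1 hsupp)
    hc hgc

end DiffEnt

lemma Set.indicator_one_mul_log_indicator_one {α : Type*} (s : Set α) (x : α) :
    s.indicator 1 x * Real.log (s.indicator 1 x) = 0 := by
  by_cases hx : x ∈ s <;> simp [hx]

lemma Set.ofReal_indicator_one {α : Type*} (s : Set α) :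
    (fun x => ENNReal.ofReal (s.indicator 1 x)) = s.indicator 1 := by
  ext x
  by_cases hx : x ∈ s <;> simp [hx]

section LConvolution

variable {G : Type*} [AddGroup G] [MeasurableSpace G] {μ : Measure G}

lemma support_lconvolution_subset (f g : G → ℝ≥0∞) :
    support (f ⋆ₗ[μ] g) ⊆ support f + support g := by
  intro x hx
  by_contra hnot
  have hzero : ∀ y, f y * g (-y + x) = 0 := fun y => by
    by_contra h
    obtain ⟨hfy, hgy⟩ := mul_ne_zero_iff.1 h
    exact hnot ⟨y, hfy, -y + x, hgy, add_neg_cancel_left y x⟩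
  exact hx (by simp [lconvolution_def, hzero])

variable [MeasurableAdd₂ G] [MeasurableNeg G]

lemma indicator_one_lconvolution_indicator_one {s t : Set G} (hs : MeasurableSet s)
    (ht : MeasurableSet t) (x : G) :
    (s.indicator 1 ⋆ₗ[μ] t.indicator 1) x = μ (s ∩ (fun y => -y + x) ⁻¹' t) := by
  rw [lconvolution_def, ← lintegral_indicator_one (hs.inter (ht.preimage (by fun_prop)))]
  congr 1 with y
  by_cases hy : y ∈ s <;> by_cases hy' : -y + x ∈ t <;> simp [hy, hy']

lemma ProbabilityTheory.IndepFun.map_add_eq_withDensity_lconvolution {Ω : Type*}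
    [MeasurableSpace Ω] {P : Measure Ω} [IsFiniteMeasure P] [SFinite μ] [μ.IsAddLeftInvariant]
    {X Y : Ω → G} {f g : G → ℝ≥0∞} (hX : Measurable X) (hY : Measurable Y)
    (hXY : IndepFun X Y P) (hf : Measurable f) (hg : Measurable g)
    (hmX : P.map X = μ.withDensity f) (hmY : P.map Y = μ.withDensity g) :
    P.map (X + Y) = μ.withDensity (f ⋆ₗ[μ] g) := by
  rw [hXY.map_add_eq_map_conv_map hX hY, hmX, hmY, conv_withDensity_eq_lconvolution hf hg]

end LConvolution

lemma measure_support_lconvolution_ne_top {E : Type*} [NormedAddCommGroup E] [ProperSpace E]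
    [MeasurableSpace E] {μ ν : Measure E} [IsFiniteMeasureOnCompacts ν] {f g : E → ℝ≥0∞}
    (hf : Bornology.IsBounded (support f)) (hg : Bornology.IsBounded (support g)) :
    ν (support (f ⋆ₗ[μ] g)) ≠ ∞ :=
  ne_top_of_le_ne_top (hf.add hg).measure_lt_top.ne (measure_mono (support_lconvolution_subset f g))

lemma Nat.two_pow_add_two_pow_lt_of_le_of_lt {i j l : ℕ} (hij : i ≤ j) (hjl : j < l) (k : ℕ) :
    2 ^ i + 2 ^ j < 2 ^ k + 2 ^ l := by
  have hi : 2 ^ i ≤ 2 ^ j := Nat.pow_le_pow_right two_pos hij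
  have hj : 2 ^ (j + 1) ≤ 2 ^ l := Nat.pow_le_pow_right two_pos hjl
  have hk := Nat.two_pow_pos k
  rw [pow_succ] at hj
  omega

lemma Nat.two_pow_add_two_pow_inj {i j k l : ℕ} (hij : i ≤ j) (hkl : k ≤ l)
    (h : 2 ^ i + 2 ^ j = 2 ^ k + 2 ^ l) : i = k ∧ j = l := by
  obtain rfl : j = l := by
    by_contra hne
    rcases lt_or_gt_of_ne hne with hlt | hlt
    · exact (Nat.two_pow_add_two_pow_lt_of_le_of_lt hij hlt k).ne h
    · exact (Nat.two_pow_add_two_pow_lt_of_le_of_lt hkl hlt i).ne h.symm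
  exact ⟨Nat.pow_right_injective le_rfl (show 2 ^ i = 2 ^ k by omega), rfl⟩

lemma Nat.eq_or_eq_of_two_pow_add_two_pow_eq {i j k l : ℕ}
    (h : 2 ^ i + 2 ^ j = 2 ^ k + 2 ^ l) : i = k ∨ i = l := by
  rcases le_total i j with hij | hij <;> rcases le_total k l with hkl | hkl
  · exact .inl (Nat.two_pow_add_two_pow_inj hij hkl h).1
  · exact .inr (Nat.two_pow_add_two_pow_inj hij hkl (by omega)).1
  · exact .inr (Nat.two_pow_add_two_pow_inj hij hkl (by omega)).2
  · exact .inl (Nat.two_pow_add_two_pow_inj hij hkl (by omega)).2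

lemma Nat.eq_of_mem_Ioo_of_mem_Ioo {m n : ℕ} {x δ : ℝ} (hδ : δ ≤ 1)
    (hm : x ∈ Ioo (m : ℝ) (m + δ)) (hn : x ∈ Ioo (n : ℝ) (n + δ)) : m = n := by
  have hmn : (m : ℝ) < n + 1 := by linarith [hm.1, hn.2]
  have hnm : (n : ℝ) < m + 1 := by linarith [hn.1, hm.2]
  norm_cast at hmn hnm
  omega

lemma pairwise_disjoint_Ioo_two_pow {ε : ℝ} (hε : ε ≤ 1) :
    Pairwise (Disjoint on fun i : ℕ => Ioo (2 ^ i : ℝ) (2 ^ i + ε)) := by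
  have key : ∀ i j : ℕ, i < j → (2 : ℝ) ^ i + ε ≤ 2 ^ j := fun i j hij => by
    have h1 : (1 : ℝ) ≤ 2 ^ i := one_le_pow₀ one_le_two
    have h2 : (2 : ℝ) ^ (i + 1) ≤ 2 ^ j := pow_le_pow_right₀ one_le_two hij
    rw [pow_succ] at h2
    linarith
  intro i j hij
  rcases hij.lt_or_gt with h | h
  · exact Ioo_disjoint_Ioo.2 (by simp [key i j h])
  · exact Ioo_disjoint_Ioo.2 (by simp [key j i h])

noncomputable def twoPowIntervals (ε : ℝ) (N : ℕ) : Set ℝ :=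
  ⋃ i ∈ Finset.range N, Ioo (2 ^ i) (2 ^ i + ε)

namespace twoPowIntervals

variable {ε : ℝ} {N : ℕ}

lemma measurableSet : MeasurableSet (twoPowIntervals ε N) :=
  Finset.measurableSet_biUnion _ fun _ _ => measurableSet_Ioo

lemma isBounded : Bornology.IsBounded (twoPowIntervals ε N) :=
  (Bornology.isBounded_biUnion_finset _).2 fun _ _ => Metric.isBounded_Ioo _ _

lemma volume_eq (hε : ε ≤ 1) :
    volume (twoPowIntervals ε N) = N * ENNReal.ofReal ε := by
  rw [twoPowIntervals, measure_biUnion_finset ((pairwise_disjoint_Ioo_two_pow hε).set_pairwise _)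
    fun _ _ => measurableSet_Ioo]
  simp [Real.volume_Ioo]

lemma mem_iff {x : ℝ} :
    x ∈ twoPowIntervals ε N ↔ ∃ i < N, x ∈ Ioo (2 ^ i : ℝ) (2 ^ i + ε) := by
  simp only [twoPowIntervals, Finset.mem_range, mem_iUnion, exists_prop]

lemma volume_inter_neg_add_preimage_le (hε : ε ≤ 1 / 2) (x : ℝ) :
    volume (twoPowIntervals ε N ∩ (fun y => -y + x) ⁻¹' twoPowIntervals ε N) ≤
      ENNReal.ofReal (2 * ε) := by
  set S := twoPowIntervals ε N
  have hsum : ∀ y ∈ S ∩ (fun y => -y + x) ⁻¹' S,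
      ∃ k l : ℕ, y ∈ Ioo (2 ^ k : ℝ) (2 ^ k + ε) ∧
      x ∈ Ioo ((2 ^ k + 2 ^ l : ℕ) : ℝ) ((2 ^ k + 2 ^ l : ℕ) + 2 * ε) := by
    rintro y ⟨hy, hy'⟩
    obtain ⟨k, -, hk⟩ := mem_iff.1 hy
    obtain ⟨l, -, hl⟩ := mem_iff.1 hy'
    refine ⟨k, l, hk, ?_, ?_⟩ <;> push_cast <;> linarith [hk.1, hk.2, hl.1, hl.2]
  rcases (S ∩ (fun y => -y + x) ⁻¹' S).eq_empty_or_nonempty with hempty | ⟨y₀, hy₀⟩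
  · simp [hempty]
  obtain ⟨i, j, -, hij⟩ := hsum y₀ hy₀
  calc volume (S ∩ (fun y => -y + x) ⁻¹' S)
      ≤ volume (Ioo (2 ^ i : ℝ) (2 ^ i + ε) ∪ Ioo (2 ^ j : ℝ) (2 ^ j + ε)) := by
        refine measure_mono fun y hy => ?_
        obtain ⟨k, l, hk, hkl⟩ := hsum y hy
        rcases Nat.eq_or_eq_of_two_pow_add_two_pow_eq
          (Nat.eq_of_mem_Ioo_of_mem_Ioo (by linarith) hkl hij) with rfl | rfl
        exacts [.inl hk, .inr hk]
    _ ≤ ENNReal.ofReal ε + ENNReal.ofReal ε := by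
        simpa [Real.volume_Ioo] using measure_union_le (μ := volume)
          (Ioo (2 ^ i : ℝ) (2 ^ i + ε)) (Ioo (2 ^ j : ℝ) (2 ^ j + ε))
    _ = ENNReal.ofReal (2 * ε) := by
        rw [← two_mul, ENNReal.ofReal_mul zero_le_two, ENNReal.ofReal_ofNat]

lemma volume_one_div_self (hN : N ≠ 0) : volume (twoPowIntervals (1 / N) N) = 1 := by
  have hN' : (0 : ℝ) < N := by positivity
  rw [volume_eq ((div_le_one hN').2 (by exact_mod_cast Nat.one_le_iff_ne_zero.2 hN)),
    ← ENNReal.ofReal_natCast, ← ENNReal.ofReal_mul hN'.le, mul_one_div_cancel hN'.ne',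
    ENNReal.ofReal_one]

lemma indicator_lconvolution_le (hε : ε ≤ 1 / 2) (x : ℝ) :
    ((twoPowIntervals ε N).indicator 1 ⋆ₗ (twoPowIntervals ε N).indicator 1) x ≤
      ENNReal.ofReal (2 * ε) :=
  (indicator_one_lconvolution_indicator_one measurableSet measurableSet x).trans_le
    (volume_inter_neg_add_preimage_le hε x)

lemma volume_support_lconvolution_ne_top :
    volume (support ((twoPowIntervals ε N).indicator 1 ⋆ₗ (twoPowIntervals ε N).indicator 1))
      ≠ ∞ :=
  measure_support_lconvolution_ne_top (isBounded.subset support_indicator_subset)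
    (isBounded.subset support_indicator_subset)

end twoPowIntervals

/-- For every real constant `C` there is a probability density `f` on `ℝ` with
differential entropy `h(f) = 0` such that whenever `X, X'` are independent random variables
each with density `f`, the sum `X + X'` has finite differential entropy `h(X+X') > C`. -/
theorem stmt13 (C : ℝ) :
    ∃ f : ℝ → ℝ,
      (∀ x, 0 ≤ f x) ∧ Measurable f ∧ (∫ x, f x = 1) ∧
      (-∫ x, f x * Real.log (f x) = 0) ∧
      ∀ (Ω : Type) (_ : MeasureSpace Ω) (_ : IsProbabilityMeasure (ℙ : Measure Ω))
        (X X' : Ω → ℝ), Measurable X → Measurable X' → IndepFun X X' ℙ →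
        Measure.map X ℙ = volume.withDensity (fun x => ENNReal.ofReal (f x)) →
        Measure.map X' ℙ = volume.withDensity (fun x => ENNReal.ofReal (f x)) →
        Integrable
          (fun x => Real.log
            (((Measure.map (fun ω => X ω + X' ω) ℙ).rnDeriv volume x).toReal))
          (Measure.map (fun ω => X ω + X' ω) ℙ) ∧
        C < diffEnt1 (Measure.map (fun ω => X ω + X' ω) ℙ) := by
  obtain ⟨N, hN2, hNC⟩ : ∃ N : ℕ, 2 ≤ N ∧ 2 * Real.exp C < N :=
    ⟨⌊2 * Real.exp C⌋₊ + 2, by omega,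
      by push_cast; linarith [Nat.lt_floor_add_one (2 * Real.exp C)]⟩
  have hN : (2 : ℝ) ≤ N := by exact_mod_cast hN2
  have hε : 1 / (N : ℝ) ≤ 1 / 2 := one_div_le_one_div_of_le two_pos hN
  set S := twoPowIntervals (1 / N) N
  have hSm : MeasurableSet S := twoPowIntervals.measurableSet
  have h1S : Measurable (S.indicator (1 : ℝ → ℝ≥0∞)) := measurable_one.indicator hSm
  refine ⟨S.indicator 1, fun x => indicator_nonneg (fun _ _ => zero_le_one) x,
    measurable_one.indicator hSm, ?_, by simp [indicator_one_mul_log_indicator_one], ?_⟩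
  · rw [integral_indicator_one hSm, measureReal_def,
      twoPowIntervals.volume_one_div_self (by omega), ENNReal.toReal_one]
  intro Ω _ _ X X' hX hX' hXX' hmX hmX'
  rw [ofReal_indicator_one] at hmX hmX'
  have hsum := hXX'.map_add_eq_withDensity_lconvolution hX hX' h1S h1S hmX hmX'
  have : IsProbabilityMeasure (volume.withDensity (S.indicator 1 ⋆ₗ S.indicator 1)) :=
    hsum ▸ Measure.isProbabilityMeasure_map (hX.add hX').aemeasurable
  have hg := measurable_lconvolution volume h1S h1S
  have hgc := twoPowIntervals.indicator_lconvolution_le (N := N) hε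
  rw [← Pi.add_def, hsum]
  refine ⟨integrable_log_rnDeriv_withDensity hg
    (fun x => (hgc x).trans (ENNReal.ofReal_le_one.2 (by linarith)))
    twoPowIntervals.volume_support_lconvolution_ne_top, ?_⟩
  calc C < -Real.log (2 * (1 / N)) := by
        rw [← Real.log_inv, mul_one_div, inv_div, Real.lt_log_iff_exp_lt (by positivity),
          lt_div_iff₀ two_pos]
        linarith
    _ ≤ _ := neg_log_le_diffEnt1_withDensity hg (by positivity) (by linarith) hgc
      twoPowIntervals.volume_support_lconvolution_ne_top
end
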